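/- arXiv:1606.01715 — 3 statements merged into one kernel-verified Lean document; each statement's English description precedes it below -/
import Mathlib

section
/- Let p be an odd prime and let e_p := max{m : p^m | a_{α(p)}}. Then for all n > e_p, α(p^n) = p^{n-e_p}·α(p). -/
noncomputable def fibAlpha (n : ℕ) : ℕ := sInf {m | 0 < m ∧ n ∣ Nat.fib m}

/-- `e_p`: the exact power of `p` dividing `fib (α p)`. -/
noncomputable def fibE (p : ℕ) : ℕ := (Nat.fib (fibAlpha p)).factorization p

/-!
The residues of `(fib n, fib (n + 1))` modulo `N` form the orbit of `(0, 1)` under the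
invertible map `(x, y) ↦ (y, x + y)` of the finite set `(ZMod N)²`, so `N` divides some `fib m`
with `m > 0`; since `fib (gcd m n) = gcd (fib m) (fib n)`, the indices `m` with `N ∣ fib m` are
then exactly the multiples of `α N`.

Writing `F = fib a` and `G = fib (a - 1)`, the addition formula gives
`fib (a * k) ≡ k F G^(k-1) + (k choose 2) F² G^(k-2) [MOD F³]`. If `p ∣ F` then `p ∤ G`, and
for odd `p` this yields the lifting-the-exponent law `v_p (fib (a * k)) = v_p (fib a) + v_p k`.
Hence `p ^ n ∣ fib m` iff `m = α p * k` with `n ≤ e_p + v_p k`, that is, iff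
`p ^ (n - e_p) * α p ∣ m`.
-/

open Nat (fib fib_add fib_add_two fib_dvd fib_gcd)

def fibShift (N : ℕ) : Equiv.Perm (ZMod N × ZMod N) where
  toFun x := (x.2, x.1 + x.2)
  invFun x := (x.2 - x.1, x.1)
  left_inv x := by simp
  right_inv x := by simp

lemma fibShift_pow_apply_zero_one (N n : ℕ) :
    (fibShift N ^ n) (0, 1) = ((fib n : ZMod N), (fib (n + 1) : ZMod N)) := by
  induction n with
  | zero => simp
  | succ n ih =>
    rw [pow_succ', Equiv.Perm.mul_apply, ih]
    simp [fibShift, fib_add_two]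

lemma exists_pos_fib_dvd {N : ℕ} (hN : N ≠ 0) : ∃ m, 0 < m ∧ N ∣ fib m := by
  have : NeZero N := ⟨hN⟩
  refine ⟨orderOf (fibShift N), orderOf_pos _, ?_⟩
  have h := congrArg Prod.fst (fibShift_pow_apply_zero_one N (orderOf (fibShift N)))
  rw [pow_orderOf_eq_one] at h
  exact (ZMod.natCast_eq_zero_iff _ _).1 h.symm

lemma fibAlpha_spec {N : ℕ} (hN : N ≠ 0) : 0 < fibAlpha N ∧ N ∣ fib (fibAlpha N) :=
  Nat.sInf_mem (exists_pos_fib_dvd hN)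

lemma dvd_fib_iff_fibAlpha_dvd {N : ℕ} (hN : N ≠ 0) (m : ℕ) :
    N ∣ fib m ↔ fibAlpha N ∣ m := by
  obtain ⟨hα, hN_dvd⟩ := fibAlpha_spec hN
  refine ⟨fun h => ?_, fun h => hN_dvd.trans (fib_dvd _ _ h)⟩
  have hgcd : N ∣ fib (Nat.gcd m (fibAlpha N)) := by
    rw [fib_gcd]
    exact Nat.dvd_gcd h hN_dvd
  have hle : fibAlpha N ≤ Nat.gcd m (fibAlpha N) :=
    Nat.sInf_le ⟨Nat.gcd_pos_of_pos_right m hα, hgcd⟩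
  have heq : Nat.gcd m (fibAlpha N) = fibAlpha N :=
    le_antisymm (Nat.le_of_dvd hα (Nat.gcd_dvd_right _ _)) hle
  exact heq ▸ Nat.gcd_dvd_left _ _

lemma fibAlpha_eq_of_forall_dvd_fib_iff {N d : ℕ} (hN : N ≠ 0)
    (h : ∀ m, N ∣ fib m ↔ d ∣ m) : fibAlpha N = d :=
  Nat.dvd_antisymm ((dvd_fib_iff_fibAlpha_dvd hN d).1 ((h d).2 dvd_rfl))
    ((h _).1 (fibAlpha_spec hN).2)

lemma fib_mul_succ_expansion {a : ℕ} (ha : a ≠ 0) (k : ℕ) : ∃ c d : ℕ,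
    fib (a * (k + 1)) = (k + 1) * fib a * fib (a - 1) ^ k
        + (k + 1).choose 2 * fib a ^ 2 * fib (a - 1) ^ (k - 1) + c * fib a ^ 3 ∧
    fib (a * (k + 1) + 1) = fib (a - 1) ^ (k + 1) + (k + 1) * fib a * fib (a - 1) ^ k
        + d * fib a ^ 2 := by
  obtain ⟨b, rfl⟩ := Nat.exists_eq_add_one_of_ne_zero ha
  simp only [Nat.add_sub_cancel]
  induction k with
  | zero => exact ⟨0, 0, by simp, by simpa using fib_add_two⟩
  | succ k ih =>
    obtain ⟨c, d, hc, hd⟩ := ih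
    have hfib : fib ((b + 1) * (k + 1 + 1)) =
        fib ((b + 1) * (k + 1)) * fib b + fib ((b + 1) * (k + 1) + 1) * fib (b + 1) := by
      rw [← fib_add]; ring_nf
    have hfib_succ : fib ((b + 1) * (k + 1 + 1) + 1) = fib ((b + 1) * (k + 1) + 1) * fib b
        + (fib ((b + 1) * (k + 1)) + fib ((b + 1) * (k + 1) + 1)) * fib (b + 1) := by
      rw [← fib_add_two, ← fib_add]; ring_nf
    have hchoose : (k + 1 + 1).choose 2 = (k + 1).choose 2 + (k + 1) := by
      rw [Nat.choose_succ_succ' (k + 1) 1, Nat.choose_one_right]; exact add_comm _ _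
    refine ⟨c * fib b + d, d * fib b + 2 * (k + 1) * fib b ^ k
        + (k + 1).choose 2 * fib b ^ (k - 1) * fib (b + 1) + c * fib (b + 1) ^ 2
        + d * fib (b + 1), ?_, ?_⟩
    · rw [hfib, hc, hd, hchoose]
      rcases k with _ | k
      · simp; ring
      · simp only [add_tsub_cancel_right]; ring
    · rw [hfib_succ, hc, hd]
      rcases k with _ | k
      · simp; ring
      · simp only [add_tsub_cancel_right]; ring

lemma padicValNat_add_of_pow_succ_dvd {p x y : ℕ} [Fact p.Prime] (hx : x ≠ 0)
    (hy : p ^ (padicValNat p x + 1) ∣ y) : padicValNat p (x + y) = padicValNat p x := by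
  have hxy : x + y ≠ 0 := by omega
  apply le_antisymm
  · by_contra! h
    exact pow_succ_padicValNat_not_dvd hx
      ((Nat.dvd_add_left hy).1 ((padicValNat_dvd_iff_le hxy).2 h))
  · exact (padicValNat_dvd_iff_le hxy).1 <|
      dvd_add pow_padicValNat_dvd ((pow_dvd_pow p (Nat.le_succ _)).trans hy)

lemma not_dvd_fib_sub_one {p a : ℕ} (hp : p.Prime) (ha : a ≠ 0) (hpa : p ∣ fib a) :
    ¬ p ∣ fib (a - 1) := by
  have hcop := Nat.fib_coprime_fib_succ (a - 1)
  rw [Nat.sub_add_cancel (Nat.one_le_iff_ne_zero.2 ha)] at hcop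
  exact fun h => hp.ne_one (Nat.eq_one_of_dvd_coprimes hcop h hpa)

section LiftingTheExponent

variable {p a : ℕ} [hp : Fact p.Prime]

lemma padicValNat_fib_mul_of_not_dvd {k : ℕ} (hpa : p ∣ fib a) (hpk : ¬ p ∣ k) :
    padicValNat p (fib (a * k)) = padicValNat p (fib a) := by
  rcases eq_or_ne a 0 with rfl | ha
  · simp
  have hk : k ≠ 0 := by rintro rfl; exact hpk (dvd_zero p)
  obtain ⟨j, rfl⟩ := Nat.exists_eq_add_one_of_ne_zero hk
  obtain ⟨c, -, hc, -⟩ := fib_mul_succ_expansion ha j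
  have hG := not_dvd_fib_sub_one hp.out ha hpa
  have hF : fib a ≠ 0 := by simpa using ha
  have hG0 : fib (a - 1) ≠ 0 := fun h => hG (h ▸ dvd_zero p)
  have hlead : padicValNat p ((j + 1) * fib a * fib (a - 1) ^ j) = padicValNat p (fib a) := by
    rw [padicValNat.mul (by positivity) (by positivity), padicValNat.mul (by omega) hF,
      padicValNat.pow, padicValNat.eq_zero_of_not_dvd hpk, padicValNat.eq_zero_of_not_dvd hG]
    ring
  have htail : fib a ^ 2 ∣ (j + 1).choose 2 * fib a ^ 2 * fib (a - 1) ^ (j - 1) + c * fib a ^ 3 :=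
    dvd_add ((dvd_mul_left _ _).mul_right _) (Dvd.intro_left (c * fib a) (by ring))
  have hsq : p ^ (padicValNat p (fib a) + 1) ∣ fib a ^ 2 := by
    rw [pow_succ, sq]
    exact mul_dvd_mul pow_padicValNat_dvd hpa
  rw [hc, add_assoc, padicValNat_add_of_pow_succ_dvd (by positivity) (hlead ▸ hsq.trans htail),
    hlead]

lemma padicValNat_fib_mul_self (hp2 : p ≠ 2) (ha : a ≠ 0) (hpa : p ∣ fib a) :
    padicValNat p (fib (a * p)) = padicValNat p (fib a) + 1 := by
  obtain ⟨j, hj⟩ := Nat.exists_eq_add_one_of_ne_zero hp.out.ne_zero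
  obtain ⟨c, -, hc, -⟩ := fib_mul_succ_expansion ha j
  rw [← hj] at hc
  have hG := not_dvd_fib_sub_one hp.out ha hpa
  have hF : fib a ≠ 0 := by simpa using ha
  have hG0 : fib (a - 1) ≠ 0 := fun h => hG (h ▸ dvd_zero p)
  have hpF : p * fib a ≠ 0 := mul_ne_zero hp.out.ne_zero hF
  have hlead : padicValNat p (p * fib a * fib (a - 1) ^ j) = padicValNat p (fib a) + 1 := by
    rw [padicValNat.mul hpF (by positivity), padicValNat.mul hp.out.ne_zero hF,
      padicValNat.pow, padicValNat_self, padicValNat.eq_zero_of_not_dvd hG]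
    ring
  have hp_choose : p ∣ p.choose 2 := hp.out.dvd_choose_self two_ne_zero
    (lt_of_le_of_ne hp.out.two_le (Ne.symm hp2))
  have htail :
      p * fib a ^ 2 ∣ p.choose 2 * fib a ^ 2 * fib (a - 1) ^ (j - 1) + c * fib a ^ 3 := by
    refine dvd_add ((mul_dvd_mul_right hp_choose _).mul_right _) ?_
    exact (mul_dvd_mul_right hpa (fib a ^ 2)).trans (Dvd.intro_left c (by ring))
  have hsq : p ^ (padicValNat p (fib a) + 1 + 1) ∣ p * fib a ^ 2 := by
    rw [pow_succ, pow_succ, mul_comm, sq]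
    exact mul_dvd_mul_left p (mul_dvd_mul pow_padicValNat_dvd hpa)
  rw [hc, add_assoc, padicValNat_add_of_pow_succ_dvd (mul_ne_zero hpF (by positivity))
    (hlead ▸ hsq.trans htail), hlead]

theorem padicValNat_fib_mul (hp2 : p ≠ 2) (ha : a ≠ 0) (hpa : p ∣ fib a) {k : ℕ}
    (hk : k ≠ 0) :
    padicValNat p (fib (a * k)) = padicValNat p (fib a) + padicValNat p k := by
  induction k using Nat.strong_induction_on with
  | _ k ih =>
    by_cases hpk : p ∣ k
    · obtain ⟨k, rfl⟩ := hpk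
      have hk' : k ≠ 0 := right_ne_zero_of_mul hk
      have hpak : p ∣ fib (a * k) := hpa.trans (fib_dvd _ _ (dvd_mul_right a k))
      rw [show a * (p * k) = a * k * p by ring,
        padicValNat_fib_mul_self hp2 (mul_ne_zero ha hk') hpak,
        ih k (lt_mul_left (Nat.pos_of_ne_zero hk') hp.out.one_lt) hk',
        padicValNat.mul hp.out.ne_zero hk', padicValNat_self]
      ring
    · rw [padicValNat_fib_mul_of_not_dvd hpa hpk, padicValNat.eq_zero_of_not_dvd hpk, add_zero]

end LiftingTheExponent

theorem fibAlpha_prime_pow (p : ℕ) (hp : p.Prime) (hodd : p ≠ 2) (n : ℕ) (hn : fibE p < n) :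
    fibAlpha (p ^ n) = p ^ (n - fibE p) * fibAlpha p := by
  have : Fact p.Prime := ⟨hp⟩
  obtain ⟨hα, hp_dvd⟩ := fibAlpha_spec hp.ne_zero
  refine fibAlpha_eq_of_forall_dvd_fib_iff (pow_ne_zero n hp.ne_zero) fun m => ?_
  by_cases hm : fibAlpha p ∣ m
  · obtain ⟨k, rfl⟩ := hm
    rcases eq_or_ne k 0 with rfl | hk
    · simp
    rw [padicValNat_dvd_iff_le (by simp [hα.ne', hk]), padicValNat_fib_mul hodd hα.ne' hp_dvd hk,
      mul_comm (fibAlpha p), mul_dvd_mul_iff_right hα.ne', padicValNat_dvd_iff_le hk, fibE,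
      Nat.factorization_def _ hp]
    omega
  · have hpm : ¬ p ∣ fib m := by rwa [dvd_fib_iff_fibAlpha_dvd hp.ne_zero]
    exact iff_of_false (fun h => hpm ((dvd_pow_self p (by omega)).trans h))
      (fun h => hm ((dvd_mul_left _ _).trans h))
end

section
/- For arithmetic functions f, g and real x ≥ 1, ∑_{n ≤ x} (f*g)(a_n) = ∑_{n : α(n) ≤ x} f(n) · ∑_{d ≤ x/α(n)} g(a_{d·α(n)}/n), where f*g denotes Dirichlet convolution. -/
/-!
Because the Fibonacci numbers form a strong divisibility sequence, `n ∣ a_m ↔ α(n) ∣ m` for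
`m ≥ 1`. Hence the pairs `(m, n)` with `m ≤ x` and `n ∣ a_m` are exactly the pairs
`(d·α(n), n)` with `d ≤ x/α(n)`, and the identity is the interchange of the two summations.
-/

open Finset

lemma dvd_fib_fibAlpha {n : ℕ} (h : 0 < fibAlpha n) : n ∣ Nat.fib (fibAlpha n) :=
  (Nat.sInf_mem (Nat.nonempty_of_pos_sInf h)).2

lemma dvd_fib_iff_fibAlpha_dvd_s3 {n m : ℕ} (hm : 0 < m) : n ∣ Nat.fib m ↔ fibAlpha n ∣ m := by
  constructor
  · intro hn
    obtain ⟨hpos, hα⟩ := Nat.sInf_mem (⟨m, hm, hn⟩ : {m | 0 < m ∧ n ∣ Nat.fib m}.Nonempty)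
    change 0 < fibAlpha n at hpos
    have hgcd : n ∣ Nat.fib (Nat.gcd m (fibAlpha n)) := by
      rw [Nat.fib_gcd]
      exact Nat.dvd_gcd hn hα
    have hle : fibAlpha n ≤ Nat.gcd m (fibAlpha n) :=
      Nat.sInf_le ⟨Nat.gcd_pos_of_pos_left _ hm, hgcd⟩
    exact Nat.gcd_eq_right_iff_dvd.mp (le_antisymm (Nat.gcd_le_right _ hpos) hle)
  · intro hα
    exact (dvd_fib_fibAlpha (Nat.pos_of_dvd_of_pos hα hm)).trans (Nat.fib_dvd _ _ hα)

lemma sum_Icc_filter_dvd {M : Type*} [AddCommMonoid M] (k N : ℕ) (h : ℕ → M) :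
    ∑ m ∈ (Icc 1 N).filter (k ∣ ·), h m = ∑ e ∈ Icc 1 (N / k), h (e * k) := by
  rcases Nat.eq_zero_or_pos k with rfl | hk
  · have hempty : (Icc 1 N).filter (0 ∣ ·) = ∅ :=
      filter_false_of_mem fun m hm => by
        rw [zero_dvd_iff]
        exact Nat.one_le_iff_ne_zero.mp (mem_Icc.mp hm).1
    rw [hempty, Nat.div_zero, sum_empty, Icc_eq_empty_of_lt zero_lt_one, sum_empty]
  symm
  refine sum_nbij' (· * k) (· / k) ?_ ?_ ?_ ?_ (fun _ _ => rfl)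
  · intro e he
    simp only [mem_filter, mem_Icc] at he ⊢
    exact ⟨⟨Nat.mul_pos he.1 hk, (Nat.le_div_iff_mul_le hk).mp he.2⟩, dvd_mul_left _ _⟩
  · intro m hm
    simp only [mem_filter, mem_Icc] at hm ⊢
    exact ⟨(Nat.one_le_div_iff hk).mpr (Nat.le_of_dvd hm.1.1 hm.2), Nat.div_le_div_right hm.1.2⟩
  · intro e _
    exact Nat.mul_div_cancel e hk
  · intro m hm
    exact Nat.div_mul_cancel (mem_filter.mp hm).2

lemma mem_Icc_and_mem_divisors_fib_iff {N m d : ℕ} :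
    (m ∈ Icc 1 N ∧ d ∈ (Nat.fib m).divisors) ↔
      (m ∈ (Icc 1 N).filter (fibAlpha d ∣ ·) ∧
        d ∈ (Icc 1 (Nat.fib N)).filter (fun n => fibAlpha n ≤ N)) := by
  simp only [mem_filter, mem_Icc, Nat.mem_divisors]
  constructor
  · rintro ⟨⟨hm, hmN⟩, hd, hfib⟩
    have hα := (dvd_fib_iff_fibAlpha_dvd_s3 hm).mp hd
    exact ⟨⟨⟨hm, hmN⟩, hα⟩, ⟨Nat.pos_of_dvd_of_pos hd (Nat.fib_pos.mpr hm),
      (Nat.le_of_dvd (Nat.pos_of_ne_zero hfib) hd).trans (Nat.fib_mono hmN)⟩,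
      (Nat.le_of_dvd hm hα).trans hmN⟩
  · rintro ⟨⟨⟨hm, hmN⟩, hα⟩, -, -⟩
    exact ⟨⟨hm, hmN⟩, (dvd_fib_iff_fibAlpha_dvd_s3 hm).mpr hα, (Nat.fib_pos.mpr hm).ne'⟩

/-- For `k > 0`, `⌊x / k⌋ = ⌊x⌋₊ / k` (natural division), and the outer sum on the right may be
restricted to `n ≤ fib ⌊x⌋₊` since `α n > ⌊x⌋₊` for larger `n`. -/
theorem sum_dirichlet_fib_general (f g : ℕ → ℂ) (x : ℝ) :
    ∑ n ∈ Icc 1 ⌊x⌋₊, ∑ d ∈ (Nat.fib n).divisors, f d * g (Nat.fib n / d)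
      = ∑ n ∈ (Icc 1 (Nat.fib ⌊x⌋₊)).filter (fun n => fibAlpha n ≤ ⌊x⌋₊),
          f n * ∑ d ∈ Icc 1 (⌊x⌋₊ / fibAlpha n), g (Nat.fib (d * fibAlpha n) / n) := by
  rw [sum_comm' fun _ _ => mem_Icc_and_mem_divisors_fib_iff]
  refine sum_congr rfl fun n _ => ?_
  rw [mul_sum, sum_Icc_filter_dvd (fibAlpha n) ⌊x⌋₊ fun m => f n * g (Nat.fib m / n)]

/-- Theorem 1: double counting formula for Dirichlet products at Fibonacci numbers.
Note that for a positive natural number `k`, `⌊x / k⌋ = ⌊x⌋₊ / k` (natural division),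
and the outer sum on the right may be restricted to `n ≤ fib ⌊x⌋₊` since `α n > ⌊x⌋₊`
for larger `n`. -/
theorem sum_dirichlet_fib (f g : ℕ → ℂ) (x : ℝ) (hx : 1 ≤ x) :
    ∑ n ∈ Icc 1 ⌊x⌋₊, ∑ d ∈ (Nat.fib n).divisors, f d * g (Nat.fib n / d)
      = ∑ n ∈ (Icc 1 (Nat.fib ⌊x⌋₊)).filter (fun n => fibAlpha n ≤ ⌊x⌋₊),
          f n * ∑ d ∈ Icc 1 (⌊x⌋₊ / fibAlpha n), g (Nat.fib (d * fibAlpha n) / n) :=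
  sum_dirichlet_fib_general f g x
end

section
/- ∑_{n : α(n) ≤ x} Λ(n) = log lcm(a_1, a_2, …, a_{⌊x⌋}) for all real x ≥ 1. -/
open Finset ArithmeticFunction

/-!
Both sides are sums of `Λ` over prime powers. Every `n` with `fibAlpha n ≤ m` divides
`a_{fibAlpha n}`, hence the lcm `L` of `a_1, …, a_m`; conversely a prime power dividing `L`
divides one of the `a_i` (its exponent in `L` is the maximum of its exponents in the `a_i`),
so it has rank at most `m` and is at most `a_m`. The identity `∑_{d ∣ L} Λ d = log L` concludes.
-/

def fibStep (R : Type*) [AddGroupWithOne R] : Equiv.Perm (R × R) where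
  toFun p := (p.2, p.1 + p.2)
  invFun p := (p.2 - p.1, p.1)
  left_inv p := by simp
  right_inv p := by simp

theorem fibStep_pow_apply_zero_one (R : Type*) [AddGroupWithOne R] (k : ℕ) :
    (fibStep R ^ k) (0, 1) = ((Nat.fib k : R), (Nat.fib (k + 1) : R)) := by
  induction k with
  | zero => simp
  | succ k ih =>
    rw [pow_succ', Equiv.Perm.mul_apply, ih]
    simp [fibStep, Nat.fib_add_two]

/-- The Fibonacci step is a permutation of the finite set `ZMod n × ZMod n`, so it has a
positive order `k`, and then `(a_k, a_{k+1}) ≡ (0, 1) [MOD n]`. -/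
theorem exists_pos_dvd_fib {n : ℕ} (hn : n ≠ 0) : ∃ k, 0 < k ∧ n ∣ Nat.fib k := by
  have : NeZero n := ⟨hn⟩
  set k := orderOf (fibStep (ZMod n))
  have hperiod := fibStep_pow_apply_zero_one (ZMod n) k
  rw [pow_orderOf_eq_one, Equiv.Perm.one_apply] at hperiod
  refine ⟨k, orderOf_pos _, (ZMod.natCast_eq_zero_iff _ _).mp ?_⟩
  exact (congrArg Prod.fst hperiod).symm

theorem fibAlpha_le_iff {n : ℕ} (hn : n ≠ 0) (m : ℕ) :
    fibAlpha n ≤ m ↔ ∃ i ∈ Icc 1 m, n ∣ Nat.fib i := by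
  let S : Set ℕ := {k | 0 < k ∧ n ∣ Nat.fib k}
  constructor
  · intro h
    obtain ⟨hpos, hdvd⟩ : fibAlpha n ∈ S := Nat.sInf_mem (exists_pos_dvd_fib hn)
    exact ⟨fibAlpha n, mem_Icc.mpr ⟨hpos, h⟩, hdvd⟩
  · rintro ⟨i, hi, hdvd⟩
    exact (Nat.sInf_le (s := S) ⟨(mem_Icc.mp hi).1, hdvd⟩).trans (mem_Icc.mp hi).2

theorem IsPrimePow.exists_dvd_of_dvd_finset_lcm {ι : Type*} {s : Finset ι} {f : ι → ℕ}
    {q : ℕ} (hq : IsPrimePow q) (h : q ∣ s.lcm f) : ∃ i ∈ s, q ∣ f i := by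
  by_cases hzero : ∃ i ∈ s, f i = 0
  · obtain ⟨i, hi, hfi⟩ := hzero
    exact ⟨i, hi, hfi ▸ dvd_zero q⟩
  push Not at hzero
  obtain ⟨p, k, hp, hk, rfl⟩ := hq
  have hp := hp.nat_prime
  have hL : s.lcm f ≠ 0 := fun h0 => by
    obtain ⟨i, hi, hfi⟩ := Finset.lcm_eq_zero_iff.mp h0
    exact hzero i hi hfi
  rw [hp.pow_dvd_iff_le_factorization hL, factorization_lcm hzero,
    Finset.le_sup_iff hk] at h
  obtain ⟨i, hi, hle⟩ := h
  exact ⟨i, hi, (hp.pow_dvd_iff_le_factorization (hzero i hi)).mpr hle⟩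

theorem lcm_fib_ne_zero (m : ℕ) : (Icc 1 m).lcm Nat.fib ≠ 0 := by
  rw [Ne, Finset.lcm_eq_zero_iff]
  rintro ⟨i, hi, hfi⟩
  exact (Nat.fib_pos.mpr (mem_Icc.mp hi).1).ne' hfi

theorem sum_vonMangoldt_fibAlpha_le (m : ℕ) :
    ∑ n ∈ (Icc 1 (Nat.fib m)).filter (fun n => fibAlpha n ≤ m), Λ n
      = Real.log (((Icc 1 m).lcm Nat.fib : ℕ) : ℝ) := by
  rw [← vonMangoldt_sum]
  refine sum_subset (fun n hn => ?_) (fun n hn hnot => ?_)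
  · obtain ⟨hn, hα⟩ := mem_filter.mp hn
    have hn0 : n ≠ 0 := by grind
    obtain ⟨i, hi, hdvd⟩ := (fibAlpha_le_iff hn0 m).mp hα
    exact Nat.mem_divisors.mpr ⟨hdvd.trans (dvd_lcm hi), lcm_fib_ne_zero m⟩
  · by_contra hΛ
    obtain ⟨i, hi, hdvd⟩ := (vonMangoldt_ne_zero_iff.mp hΛ).exists_dvd_of_dvd_finset_lcm
      (Nat.dvd_of_mem_divisors hn)
    have hn0 : n ≠ 0 := Nat.ne_of_gt (Nat.pos_of_mem_divisors hn)
    have hn_le : n ≤ Nat.fib m :=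
      (Nat.le_of_dvd (Nat.fib_pos.mpr (mem_Icc.mp hi).1) hdvd).trans
        (Nat.fib_mono (mem_Icc.mp hi).2)
    exact hnot (mem_filter.mpr ⟨mem_Icc.mpr ⟨Nat.one_le_iff_ne_zero.mpr hn0, hn_le⟩,
      (fibAlpha_le_iff hn0 m).mpr ⟨i, hi, hdvd⟩⟩)

theorem vonMangoldt_sum_alpha_eq_log_lcm_general (x : ℝ) :
    ∑ n ∈ (Icc 1 (Nat.fib ⌊x⌋₊)).filter (fun n => fibAlpha n ≤ ⌊x⌋₊), Λ n
      = Real.log (((Icc 1 ⌊x⌋₊).lcm Nat.fib : ℕ) : ℝ) :=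
  sum_vonMangoldt_fibAlpha_le ⌊x⌋₊

theorem vonMangoldt_sum_alpha_eq_log_lcm (x : ℝ) (hx : 1 ≤ x) :
    ∑ n ∈ (Icc 1 (Nat.fib ⌊x⌋₊)).filter (fun n => fibAlpha n ≤ ⌊x⌋₊), Λ n
      = Real.log (((Icc 1 ⌊x⌋₊).lcm Nat.fib : ℕ) : ℝ) :=
  vonMangoldt_sum_alpha_eq_log_lcm_general x
end
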